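/- Let A ⊆ ℝ^d be a nonempty finite set with mean μ = (1/|A|)∑_{x∈A} x, and let S ⊆ ℝ^d be a nonempty finite set of centers with φ_A(S) ≥ 64·φ_A({μ}) and φ_A(S) > 0. Let T ≥ (7/3)·φ_{{μ}}(S). Then for every x ∈ A, min{φ_{{x}}(S), T} / (∑_{y∈A} min{φ_{{y}}(S), T}) ≤ 8·φ_{{x}}(S)/φ_A(S); i.e., the probability of x under thresholded D² sampling restricted to A is at most 8 times its probability under D² sampling restricted to A. -/

import Mathlib

/-!
Since `φ_{{y}}(S) ≤ 2‖y − μ‖² + 2 φ_{{μ}}(S)` and `T ≥ 2 φ_{{μ}}(S)`, thresholding at `T`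
lowers the cost of each `y` by at most `2‖y − μ‖²`. Summing over `A`, the thresholded total is
at least `φ_A(S) − 2 φ_A({μ}) ≥ φ_A(S) / 8`, while the thresholded weight of `x` is at most
`φ_{{x}}(S)`.
-/

open Finset

open scoped Classical

/-- `phiPt x S` is the squared distance from `x` to its nearest center in `S`,
i.e. `min_{s ∈ S} ‖x - s‖²`. -/
noncomputable def phiPt {d : ℕ} (x : EuclideanSpace ℝ (Fin d))
    (S : Finset (EuclideanSpace ℝ (Fin d))) : ℝ :=
  sInf ((fun s => ‖x - s‖ ^ 2) '' (S : Set (EuclideanSpace ℝ (Fin d))))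

/-- `phi A S = ∑_{x ∈ A} min_{s ∈ S} ‖x - s‖²`, the `k`-means cost of centers `S` on `A`. -/
noncomputable def phi {d : ℕ} (A S : Finset (EuclideanSpace ℝ (Fin d))) : ℝ :=
  ∑ x ∈ A, phiPt x S

/-- The mean (centroid) of a finite set of points. -/
noncomputable def mean {d : ℕ} (A : Finset (EuclideanSpace ℝ (Fin d))) :
    EuclideanSpace ℝ (Fin d) :=
  (A.card : ℝ)⁻¹ • ∑ x ∈ A, x

/-- `rho X S z` is the cost of the centers `S` on `X` after discarding the `z`
points of `X` farthest from `S`: the minimum of `phi Y S` over `Y ⊆ X` with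
`|Y| = |X| - z`. -/
noncomputable def rho {d : ℕ} (X S : Finset (EuclideanSpace ℝ (Fin d))) (z : ℕ) : ℝ :=
  sInf ((fun Y : Finset (EuclideanSpace ℝ (Fin d)) => phi Y S) ''
    {Y : Finset (EuclideanSpace ℝ (Fin d)) | Y ⊆ X ∧ Y.card = X.card - z})

lemma norm_sub_sq_le_two_mul {E : Type*} [SeminormedAddCommGroup E] (x y z : E) :
    ‖x - z‖ ^ 2 ≤ 2 * ‖x - y‖ ^ 2 + 2 * ‖y - z‖ ^ 2 :=
  calc ‖x - z‖ ^ 2 ≤ (‖x - y‖ + ‖y - z‖) ^ 2 := by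
        gcongr
        exact norm_sub_le_norm_sub_add_norm_sub x y z
    _ ≤ 2 * ‖x - y‖ ^ 2 + 2 * ‖y - z‖ ^ 2 := by
        linarith [add_sq_le (a := ‖x - y‖) (b := ‖y - z‖)]

section KMeansCost

variable {d : ℕ}

lemma phiPt_nonneg (x : EuclideanSpace ℝ (Fin d)) (S : Finset (EuclideanSpace ℝ (Fin d))) :
    0 ≤ phiPt x S :=
  Real.sInf_nonneg <| by
    rintro _ ⟨s, -, rfl⟩
    positivity

@[simp]
lemma phiPt_empty (x : EuclideanSpace ℝ (Fin d)) : phiPt x ∅ = 0 := by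
  simp [phiPt]

@[simp]
lemma phiPt_singleton (x z : EuclideanSpace ℝ (Fin d)) : phiPt x {z} = ‖x - z‖ ^ 2 := by
  simp [phiPt]

lemma phi_singleton (A : Finset (EuclideanSpace ℝ (Fin d))) (z : EuclideanSpace ℝ (Fin d)) :
    phi A {z} = ∑ y ∈ A, ‖y - z‖ ^ 2 := by
  simp [phi]

lemma phiPt_le_norm_sub_sq (x : EuclideanSpace ℝ (Fin d)) {S : Finset (EuclideanSpace ℝ (Fin d))}
    {s : EuclideanSpace ℝ (Fin d)} (hs : s ∈ S) : phiPt x S ≤ ‖x - s‖ ^ 2 :=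
  csInf_le (S.finite_toSet.image _).bddBelow ⟨s, hs, rfl⟩

lemma exists_phiPt_eq (x : EuclideanSpace ℝ (Fin d)) {S : Finset (EuclideanSpace ℝ (Fin d))}
    (hS : S.Nonempty) : ∃ s ∈ S, phiPt x S = ‖x - s‖ ^ 2 := by
  obtain ⟨s, hs, h⟩ :=
    ((coe_nonempty.2 hS).image fun s => ‖x - s‖ ^ 2).csInf_mem (S.finite_toSet.image _)
  exact ⟨s, hs, h.symm⟩

lemma phiPt_le_two_mul (x z : EuclideanSpace ℝ (Fin d)) (S : Finset (EuclideanSpace ℝ (Fin d))) :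
    phiPt x S ≤ 2 * ‖x - z‖ ^ 2 + 2 * phiPt z S := by
  rcases S.eq_empty_or_nonempty with rfl | hS
  · simp only [phiPt_empty]
    positivity
  obtain ⟨s, hs, hzs⟩ := exists_phiPt_eq z hS
  rw [hzs]
  exact (phiPt_le_norm_sub_sq x hs).trans (norm_sub_sq_le_two_mul x z s)

lemma phiPt_sub_le_min_phiPt (x z : EuclideanSpace ℝ (Fin d))
    (S : Finset (EuclideanSpace ℝ (Fin d))) {T : ℝ} (hT : 2 * phiPt z S ≤ T) :
    phiPt x S - 2 * ‖x - z‖ ^ 2 ≤ min (phiPt x S) T :=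
  le_min (by linarith [sq_nonneg ‖x - z‖]) (by linarith [phiPt_le_two_mul x z S])

lemma phi_sub_le_sum_min_phiPt (A S : Finset (EuclideanSpace ℝ (Fin d)))
    (z : EuclideanSpace ℝ (Fin d)) {T : ℝ} (hT : 2 * phiPt z S ≤ T) :
    phi A S - 2 * phi A {z} ≤ ∑ y ∈ A, min (phiPt y S) T := by
  rw [phi_singleton, phi, mul_sum, ← sum_sub_distrib]
  exact sum_le_sum fun y _ => phiPt_sub_le_min_phiPt y z S hT

end KMeansCost

theorem stmt10_general {d : ℕ} (A S : Finset (EuclideanSpace ℝ (Fin d)))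
    (h : phi A S ≥ 64 * phi A {mean A}) (hpos : 0 < phi A S)
    (T : ℝ) (hT : T ≥ (7 / 3) * phiPt (mean A) S) :
    ∀ x ∈ A,
      min (phiPt x S) T / (∑ y ∈ A, min (phiPt y S) T) ≤ 8 * phiPt x S / phi A S := by
  intro x _
  have hT2 : 2 * phiPt (mean A) S ≤ T := by linarith [phiPt_nonneg (mean A) S]
  have hsum : phi A S / 8 ≤ ∑ y ∈ A, min (phiPt y S) T := by
    linarith [phi_sub_le_sum_min_phiPt A S (mean A) hT2]
  calc min (phiPt x S) T / (∑ y ∈ A, min (phiPt y S) T)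
      ≤ phiPt x S / (phi A S / 8) := by
        gcongr
        · exact phiPt_nonneg x S
        · exact min_le_left _ _
    _ = 8 * phiPt x S / phi A S := by field_simp

/-- If `φ_A(S) ≥ 64·φ_A({μ})`, `φ_A(S) > 0`, and `T ≥ (7/3)·φ_{{μ}}(S)`,
then for every `x ∈ A`, the probability of `x` under thresholded `D²` sampling restricted
to `A` is at most `8` times its probability under `D²` sampling restricted to `A`. -/
theorem stmt10 {d : ℕ} (A S : Finset (EuclideanSpace ℝ (Fin d)))
    (hA : A.Nonempty) (hS : S.Nonempty)
    (h : phi A S ≥ 64 * phi A {mean A}) (hpos : 0 < phi A S)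
    (T : ℝ) (hT : T ≥ (7 / 3) * phiPt (mean A) S) :
    ∀ x ∈ A,
      min (phiPt x S) T / (∑ y ∈ A, min (phiPt y S) T) ≤ 8 * phiPt x S / phi A S :=
  stmt10_general A S h hpos T hT
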